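/- arXiv:2006.04701 — 7 statements merged into one kernel-verified Lean document; each statement's English description precedes it below -/
import Mathlib

section
/- Let b_1, …, b_n be a sequence of integers with b_1 = 1 and b_{i+1} ≤ b_1 + ⋯ + b_i for every i ∈ {1, …, n−1}. Then for every nonnegative integer a with a ≤ b_1 + ⋯ + b_n, there exists a subset S ⊆ {1, …, n} such that a = Σ_{i∈S} b_i. -/
/-!
Induction on `n`. A target `a ≤ b₁ + ⋯ + bₙ` is already a subset sum of the first `n` terms;
a larger target satisfies `a ≥ b₁ + ⋯ + bₙ + 1 ≥ bₙ₊₁`, so `a - bₙ₊₁` is again in range and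
`n + 1` is added to its subset.
-/

open Finset

theorem exists_subset_sum_eq_of_le_sum_add_one {b : ℕ → ℤ} {n : ℕ}
    (hb : ∀ i < n, b (i + 1) ≤ ∑ j ∈ Icc 1 i, b j + 1) {a : ℤ} (ha0 : 0 ≤ a)
    (ha : a ≤ ∑ i ∈ Icc 1 n, b i) : ∃ S ⊆ Icc 1 n, a = ∑ i ∈ S, b i := by
  induction n generalizing a with
  | zero => exact ⟨∅, empty_subset _, by simp at ha; simp; omega⟩
  | succ n ih =>
    have hIcc : Icc 1 (n + 1) = insert (n + 1) (Icc 1 n) :=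
      (insert_Icc_right_eq_Icc_add_one (by omega)).symm
    have hnot : n + 1 ∉ Icc 1 n := by simp
    have hb' : ∀ i < n, b (i + 1) ≤ ∑ j ∈ Icc 1 i, b j + 1 := fun i hi => hb i (by omega)
    rw [hIcc, sum_insert hnot] at ha
    rw [hIcc]
    by_cases hsmall : a ≤ ∑ i ∈ Icc 1 n, b i
    · obtain ⟨S, hS, rfl⟩ := ih hb' ha0 hsmall
      exact ⟨S, hS.trans (subset_insert _ _), rfl⟩
    · have hlast := hb n (Nat.lt_succ_self n)
      obtain ⟨S, hS, hSa⟩ := ih hb' (a := a - b (n + 1)) (by omega) (by omega)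
      refine ⟨insert (n + 1) S, insert_subset_insert _ hS, ?_⟩
      rw [sum_insert (fun h => hnot (hS h))]
      omega

theorem stmt_1_general (n : ℕ) (b : ℕ → ℤ) (hb1 : b 1 = 1)
    (hrec : ∀ i : ℕ, 1 ≤ i → i ≤ n - 1 → b (i + 1) ≤ ∑ j ∈ Finset.Icc 1 i, b j)
    (a : ℤ) (ha0 : 0 ≤ a) (ha : a ≤ ∑ i ∈ Finset.Icc 1 n, b i) :
    ∃ S ⊆ Finset.Icc 1 n, a = ∑ i ∈ S, b i := by
  refine exists_subset_sum_eq_of_le_sum_add_one (fun i hi => ?_) ha0 ha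
  rcases Nat.eq_zero_or_pos i with rfl | hi0
  · simp [hb1]
  · linarith [hrec i hi0 (by omega)]

/-- Lemma 2.2: if `b 1 = 1` and `b (i+1) ≤ b 1 + ⋯ + b i` for all `i ∈ [n-1]`,
then every nonnegative integer `a ≤ b 1 + ⋯ + b n` is a subset sum of the `b i`. -/
theorem stmt_1 (n : ℕ) (hn : 1 ≤ n) (b : ℕ → ℤ) (hb1 : b 1 = 1)
    (hrec : ∀ i : ℕ, 1 ≤ i → i ≤ n - 1 → b (i + 1) ≤ ∑ j ∈ Finset.Icc 1 i, b j)
    (a : ℤ) (ha0 : 0 ≤ a) (ha : a ≤ ∑ i ∈ Finset.Icc 1 n, b i) :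
    ∃ S ⊆ Finset.Icc 1 n, a = ∑ i ∈ S, b i :=
  stmt_1_general n b hb1 hrec a ha0 ha
end

section
/- Let n ≥ 2 and let r_2, …, r_n ∈ {0,1}^n be linearly independent vectors such that the n×n matrix whose first row is e_1 (the first standard basis vector) and whose i-th row is r_i for 2 ≤ i ≤ n has determinant D = 1 or D = −1. Suppose v ∈ ℝ^n is orthogonal to each of r_2, …, r_n, v(1) = 1, and for some m ≤ n the entries satisfy 0 ≤ v(i+1) ≤ v(1) + ⋯ + v(i) for all i ∈ {1, …, m−1}. Then for every nonnegative integer a with a ≤ v(1) + ⋯ + v(m), there exists an n×n binary matrix whose determinant equals a. -/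
/-!
Since `A *ᵥ v = e₁`, replacing the first row of `A` by any vector `b` gives a matrix of
determinant `det A * (b ⬝ᵥ v)` (expand along that row: the cofactors form `det A • v`).
With `b = e_j` this is the determinant of a `{0,1}`-matrix, so `det A = ±1` makes every `v j`
an integer. The growth condition then makes every integer `0 ≤ a ≤ v 1 + ⋯ + v m` a subset sum
of `v 1, …, v m` (greedily, from the largest index down); taking `b` the indicator of that
subset gives determinant `±a`, and a row swap fixes the sign.
-/

open Matrix Finset

theorem Matrix.exists_det_eq_intCast {R : Type*} [CommRing R] {n : Type*} [Fintype n]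
    [DecidableEq n] (M : Matrix n n R) (hM : ∀ i j, ∃ k : ℤ, M i j = k) :
    ∃ k : ℤ, M.det = k := by
  choose N hN using hM
  exact ⟨(Matrix.of N).det, by rw [Int.cast_det]; congr; ext i j; exact hN i j⟩

theorem Matrix.det_updateRow_eq_det_mul_dotProduct {R : Type*} [CommRing R] {n : Type*}
    [Fintype n] [DecidableEq n] {A : Matrix n n R} {v : n → R} {z : n}
    (hv : A *ᵥ v = Pi.single z 1) (b : n → R) :
    (A.updateRow z b).det = A.det * (b ⬝ᵥ v) :=
  calc (A.updateRow z b).det = (b ᵥ* A.adjugate) ⬝ᵥ Pi.single z 1 := by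
        rw [dotProduct_single, mul_one, ← cramer_transpose_apply, cramer_eq_adjugate_mulVec,
          ← adjugate_transpose, mulVec_transpose]
    _ = A.det * (b ⬝ᵥ v) := by
        rw [← dotProduct_mulVec, ← hv, mulVec_mulVec, adjugate_mul, smul_mulVec, one_mulVec,
          dotProduct_smul, smul_eq_mul]

theorem Matrix.exists_intCast_of_mulVec_eq_single {R : Type*} [CommRing R] {n : Type*}
    [Fintype n] [DecidableEq n] {A : Matrix n n R} (hA : ∀ i j, ∃ k : ℤ, A i j = k)
    (hdet : A.det = 1 ∨ A.det = -1) {v : n → R} {z : n} (hv : A *ᵥ v = Pi.single z 1)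
    (j : n) : ∃ k : ℤ, v j = k := by
  obtain ⟨k, hk⟩ := (A.updateRow z (Pi.single j 1)).exists_det_eq_intCast fun i l => by
    rcases eq_or_ne i z with rfl | hi
    · rcases eq_or_ne l j with rfl | hl
      · exact ⟨1, by simp⟩
      · exact ⟨0, by simp [hl]⟩
    · simpa [hi] using hA i l
  rw [det_updateRow_eq_det_mul_dotProduct hv, single_dotProduct, one_mul] at hk
  rcases hdet with h | h
  · exact ⟨k, by simpa [h] using hk⟩
  · exact ⟨-k, by rw [Int.cast_neg, ← hk, h]; ring⟩

theorem exists_subset_sum_eq_of_le_one_add_sum {w : ℕ → ℤ} {m : ℕ}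
    (hw : ∀ k < m, w k ≤ 1 + ∑ j ∈ range k, w j) {a : ℤ} (ha0 : 0 ≤ a)
    (ha : a ≤ ∑ j ∈ range m, w j) : ∃ s ⊆ range m, ∑ j ∈ s, w j = a := by
  induction m generalizing a with
  | zero => exact ⟨∅, empty_subset _, by simp_all [le_antisymm ha ha0]⟩
  | succ m ih =>
    have hw' : ∀ k < m, w k ≤ 1 + ∑ j ∈ range k, w j := fun k hk => hw k (by omega)
    rw [sum_range_succ] at ha
    by_cases hle : a ≤ ∑ j ∈ range m, w j
    · obtain ⟨s, hs, hsum⟩ := ih hw' ha0 hle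
      exact ⟨s, hs.trans (range_subset_range.mpr m.le_succ), hsum⟩
    · -- `hw m` and `a > ∑ j ∈ range m, w j` give `a - w m ≥ 0`
      obtain ⟨s, hs, hsum⟩ := ih hw' (a := a - w m)
        (by linarith [hw m m.lt_succ_self]) (by linarith)
      have hm : m ∉ s := fun h => by simpa using hs h
      refine ⟨insert m s, insert_subset (by simp) (hs.trans (range_subset_range.mpr m.le_succ)), ?_⟩
      rw [sum_insert hm, hsum]
      ring

theorem Fin.sum_univ_ite_mem {M : Type*} [AddCommMonoid M] {n : ℕ} {s : Finset ℕ}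
    (hs : s ⊆ range n) (f : ℕ → M) :
    ∑ j : Fin n, (if (j : ℕ) ∈ s then f j else 0) = ∑ j ∈ s, f j := by
  rw [Fin.sum_univ_eq_sum_range (fun j => if j ∈ s then f j else 0), sum_ite_mem,
    inter_eq_right.mpr hs]

theorem exists_binary_dotProduct_eq {n m : ℕ} (hm : m ≤ n) {v : Fin n → ℝ}
    (hint : ∀ j, ∃ k : ℤ, v j = k)
    (hv : ∀ i : Fin n, (i : ℕ) < m → v i ≤ 1 + ∑ j : Fin n, (if (j : ℕ) < i then v j else 0))
    {a : ℤ} (ha0 : 0 ≤ a) (ha : (a : ℝ) ≤ ∑ j : Fin n, (if (j : ℕ) < m then v j else 0)) :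
    ∃ b : Fin n → ℝ, (∀ j, b j = 0 ∨ b j = 1) ∧ b ⬝ᵥ v = a := by
  choose t ht using hint
  set w : ℕ → ℤ := fun k => if h : k < n then t ⟨k, h⟩ else 0
  have hvw : ∀ j : Fin n, v j = w j := fun j => by simp [w, ht]
  have hprefix : ∀ k ≤ n,
      ∑ j : Fin n, (if (j : ℕ) < k then v j else 0) = ∑ j ∈ range k, (w j : ℝ) := by
    intro k hk
    simp only [hvw, ← mem_range]
    exact Fin.sum_univ_ite_mem (range_subset_range.mpr hk) (fun j => (w j : ℝ))
  have hw : ∀ k < m, w k ≤ 1 + ∑ j ∈ range k, w j := by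
    intro k hk
    have := hv ⟨k, by omega⟩ hk
    rw [hprefix k (by omega), hvw] at this
    exact_mod_cast this
  obtain ⟨s, hsm, hsa⟩ :=
    exists_subset_sum_eq_of_le_one_add_sum hw ha0 (by exact_mod_cast hprefix m hm ▸ ha)
  refine ⟨fun j => if (j : ℕ) ∈ s then 1 else 0,
    fun j => by by_cases h : (j : ℕ) ∈ s <;> simp [h], ?_⟩
  simp only [dotProduct, ite_mul, one_mul, zero_mul, hvw]
  rw [Fin.sum_univ_ite_mem (hsm.trans (range_subset_range.mpr hm)) (fun j => (w j : ℝ)), ← hsa]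
  push_cast
  rfl

theorem exists_binary_det_eq_of_mulVec_eq_single {n m : ℕ} (hn : 2 ≤ n)
    {A : Matrix (Fin n) (Fin n) ℝ} (hA : ∀ i j, A i j = 0 ∨ A i j = 1)
    (hdet : A.det = 1 ∨ A.det = -1) {v : Fin n → ℝ} {z : Fin n} (hAv : A *ᵥ v = Pi.single z 1)
    (hm : m ≤ n)
    (hv : ∀ i : Fin n, (i : ℕ) < m → v i ≤ 1 + ∑ j : Fin n, (if (j : ℕ) < i then v j else 0))
    {a : ℤ} (ha0 : 0 ≤ a) (ha : (a : ℝ) ≤ ∑ j : Fin n, (if (j : ℕ) < m then v j else 0)) :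
    ∃ B : Matrix (Fin n) (Fin n) ℝ, (∀ i j, B i j = 0 ∨ B i j = 1) ∧ B.det = a := by
  have hint := exists_intCast_of_mulVec_eq_single
    (fun i j => (hA i j).elim (fun h => ⟨0, by simp [h]⟩) (fun h => ⟨1, by simp [h]⟩)) hdet hAv
  obtain ⟨b, hb, hbv⟩ := exists_binary_dotProduct_eq hm hint hv ha0 ha
  have hB : ∀ i j, A.updateRow z b i j = 0 ∨ A.updateRow z b i j = 1 := by
    intro i j
    rcases eq_or_ne i z with rfl | hi
    · simpa using hb j
    · simpa [hi] using hA i j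
  have hdetB := det_updateRow_eq_det_mul_dotProduct hAv b
  rw [hbv] at hdetB
  rcases hdet with h | h
  · exact ⟨_, hB, by rw [hdetB, h, one_mul]⟩
  · have := Fin.nontrivial_iff_two_le.mpr hn
    obtain ⟨o, ho⟩ := exists_ne z
    refine ⟨(A.updateRow z b).submatrix (Equiv.swap z o) id, fun i j => hB _ _, ?_⟩
    rw [det_permute, Equiv.Perm.sign_swap ho.symm, hdetB, h]
    push_cast
    ring

/-- Lemma 2.3: let `A` be a real `n × n` matrix whose first row is `e₁` and whose
remaining rows `r₂, …, rₙ` are linearly independent `{0,1}`-vectors, with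
`det A = ±1`.  If `v` is orthogonal to `r₂, …, rₙ`, `v 1 = 1`, and
`0 ≤ v (i+1) ≤ v 1 + ⋯ + v i` for `i ∈ [m-1]` (where `m ≤ n`), then every
nonnegative integer `a ≤ v 1 + ⋯ + v m` is the determinant of some `n × n`
binary matrix. -/
theorem stmt_2 (n : ℕ) (hn : 2 ≤ n) (A : Matrix (Fin n) (Fin n) ℝ)
    (hA0 : A ⟨0, by omega⟩ = Pi.single ⟨0, by omega⟩ 1)
    (hA01 : ∀ i : Fin n, (i : ℕ) ≠ 0 → ∀ j : Fin n, A i j = 0 ∨ A i j = 1)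
    (hdet : A.det = 1 ∨ A.det = -1)
    (v : Fin n → ℝ)
    (horth : ∀ i : Fin n, (i : ℕ) ≠ 0 → ∑ j : Fin n, v j * A i j = 0)
    (hv1 : v ⟨0, by omega⟩ = 1)
    (m : ℕ) (hm : m ≤ n)
    (hgrow : ∀ i : Fin n, 1 ≤ (i : ℕ) → (i : ℕ) ≤ m - 1 →
      0 ≤ v i ∧ v i ≤ ∑ j : Fin n, (if (j : ℕ) < (i : ℕ) then v j else 0))
    (a : ℤ) (ha0 : 0 ≤ a)
    (ha : (a : ℝ) ≤ ∑ j : Fin n, (if (j : ℕ) < m then v j else 0)) :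
    ∃ B : Matrix (Fin n) (Fin n) ℝ,
      (∀ i j : Fin n, B i j = 0 ∨ B i j = 1) ∧ B.det = (a : ℝ) := by
  set z : Fin n := ⟨0, by omega⟩
  have hA : ∀ i j, A i j = 0 ∨ A i j = 1 := by
    intro i j
    rcases eq_or_ne i z with rfl | hi
    · rcases eq_or_ne j z with rfl | hj
      · simp [hA0]
      · simp [hA0, hj]
    · exact hA01 i (fun h => hi (Fin.ext h)) j
  have hAv : A *ᵥ v = Pi.single z 1 := by
    funext i
    rcases eq_or_ne i z with rfl | hi
    · simp [mulVec, hA0, hv1]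
    · rw [Pi.single_eq_of_ne hi, mulVec, dotProduct]
      simpa [mul_comm] using horth i (fun h => hi (Fin.ext h))
  refine exists_binary_det_eq_of_mulVec_eq_single hn hA hdet hAv hm (fun i hi => ?_) ha0 ha
  rcases Nat.eq_zero_or_pos i with h0 | h1
  · obtain rfl : i = z := Fin.ext h0
    simp [hv1, h0]
  · linarith [(hgrow i h1 (by omega)).2]
end

section
/- With k, n, M, and T as in the construction, every entry of the matrix product TM lies in {0,1}; that is, TM is a binary matrix. -/
/-- The rows `s_i` of the construction (1-indexed in both arguments):
`s 1 = e₁`; for `2 ≤ i ≤ n - k` the "recursive" rows have `s i i = -1`,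
`s i j = 1` for `max 1 (i - k) ≤ j < i`, and `0` otherwise; for
`n - k + 1 ≤ i ≤ n` the "finishing" rows have `s i j = 1` iff `j = i` or
`i - k ≤ j ≤ n - k`. -/
def sRow (k n i j : ℕ) : ℤ :=
  if i = 1 then (if j = 1 then 1 else 0)
  else if i ≤ n - k then
    (if j = i then -1 else if max 1 (i - k) ≤ j ∧ j < i then 1 else 0)
  else
    (if j = i ∨ (i - k ≤ j ∧ j ≤ n - k) then 1 else 0)

/-- The matrix `M` of the construction, whose `i`-th row is `s_i`
(converting from the 0-indexed `Fin n` to the 1-indexed description). -/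
def Mmat (k n : ℕ) : Matrix (Fin n) (Fin n) ℤ :=
  fun i j => sRow k n ((i : ℕ) + 1) ((j : ℕ) + 1)

/-- The matrix `T` of the construction: `t 1 1 = 1`, `t i j = 1` when
`j ≥ i > 1` and `i ≡ j (mod k)`, and `t i j = 0` otherwise
(1-indexed description, realized on the 0-indexed `Fin n`). -/
def Tmat (k n : ℕ) : Matrix (Fin n) (Fin n) ℤ :=
  fun i j =>
    if (i : ℕ) + 1 = 1 ∧ (j : ℕ) + 1 = 1 then 1
    else if ((j : ℕ) + 1 ≥ (i : ℕ) + 1 ∧ (i : ℕ) + 1 > 1) ∧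
        ((i : ℕ) + 1) % k = ((j : ℕ) + 1) % k then 1
    else 0

/-!
For `i > 1` the `i`-th row of `T` is the indicator of the progression `i, i + k, i + 2k, … ≤ n`,
so the `i`-th row of `TM` is the sum of the rows `s_l` over that progression. In column `q`, a
row `s_l` contributes `+1` only if `l - k ≤ q` and either `q < l` or `l` is a finishing row;
as the rows of the progression are `k` apart, at most one of them does. A `-1` comes only from
the recursive row `l = q`, and then `q + k` lies in the progression and `s_{q+k}` contributes
`+1` at `q`.
-/

open Finset

lemma Finset.sum_eq_zero_or_one_of_signs {ι : Type*} (s : Finset ι) (f : ι → ℤ)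
    (hf : ∀ x ∈ s, f x = -1 ∨ f x = 0 ∨ f x = 1)
    (hpos : ∀ x ∈ s, ∀ y ∈ s, f x = 1 → f y = 1 → x = y)
    (hneg : ∀ x ∈ s, ∀ y ∈ s, f x = -1 → f y = -1 → x = y)
    (hcancel : ∀ x ∈ s, f x = -1 → ∃ y ∈ s, f y = 1) :
    ∑ x ∈ s, f x = 0 ∨ ∑ x ∈ s, f x = 1 := by
  have hsum : ∑ x ∈ s, f x = #{x ∈ s | f x = 1} - #{x ∈ s | f x = -1} := by
    rw [natCast_card_filter, natCast_card_filter, ← sum_sub_distrib]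
    refine sum_congr rfl fun x hx => ?_
    rcases hf x hx with h | h | h <;> simp [h]
  have hU : #{x ∈ s | f x = 1} ≤ 1 := card_le_one.mpr fun x hx y hy => by
    rw [mem_filter] at hx hy
    exact hpos x hx.1 y hy.1 hx.2 hy.2
  have hD : #{x ∈ s | f x = -1} ≤ 1 := card_le_one.mpr fun x hx y hy => by
    rw [mem_filter] at hx hy
    exact hneg x hx.1 y hy.1 hx.2 hy.2
  have hDU : 0 < #{x ∈ s | f x = -1} → 0 < #{x ∈ s | f x = 1} := by
    simp only [card_pos, filter_nonempty_iff]
    rintro ⟨x, hx, hfx⟩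
    exact hcancel x hx hfx
  omega

/-- The support of the `p`-th row of `T` for `p > 1` (1-indexed). -/
def progression (k n p : ℕ) : Finset ℕ := {l ∈ Icc p n | l ≡ p [MOD k]}

lemma mem_progression {k n p l : ℕ} :
    l ∈ progression k n p ↔ (p ≤ l ∧ l ≤ n) ∧ l ≡ p [MOD k] := by
  rw [progression, mem_filter, mem_Icc]

section sRow

variable {k n l q : ℕ}

lemma sRow_eq_neg_one_or_eq_zero_or_eq_one :
    sRow k n l q = -1 ∨ sRow k n l q = 0 ∨ sRow k n l q = 1 := by
  unfold sRow
  split_ifs <;> simp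

lemma sRow_eq_neg_one (h : sRow k n l q = -1) : q = l ∧ l ≤ n - k := by
  unfold sRow at h
  split_ifs at h
  omega

lemma sRow_eq_one (hl : l ≠ 1) (h : sRow k n l q = 1) : l ≤ q + k ∧ (q < l ∨ n < l + k) := by
  unfold sRow at h
  split_ifs at h <;> omega

lemma sRow_add_self (hk : 0 < k) (hl : 1 ≤ l) (hln : l ≤ n - k) : sRow k n (l + k) l = 1 := by
  unfold sRow
  split_ifs <;> omega

end sRow

lemma sum_sRow_progression {k n p : ℕ} (hk : 0 < k) (hp : 2 ≤ p) (q : ℕ) :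
    ∑ l ∈ progression k n p, sRow k n l q = 0 ∨ ∑ l ∈ progression k n p, sRow k n l q = 1 := by
  apply sum_eq_zero_or_one_of_signs _ _ fun l _ => sRow_eq_neg_one_or_eq_zero_or_eq_one
  · intro l hl l' hl' h h'
    wlog hlt : l < l' generalizing l l'
    · rcases (not_lt.mp hlt).eq_or_lt with rfl | hgt
      · rfl
      · exact (this l' hl' l hl h' h hgt).symm
    rw [mem_progression] at hl hl'
    have hgap : l + k ≤ l' := (hl.2.trans hl'.2.symm).add_le_of_lt hlt
    have := sRow_eq_one (by omega) h
    have := sRow_eq_one (by omega) h'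
    omega
  · intro l _ l' _ h h'
    rw [← (sRow_eq_neg_one h).1, ← (sRow_eq_neg_one h').1]
  · intro l hl h
    obtain ⟨rfl, hln⟩ := sRow_eq_neg_one h
    rw [mem_progression] at hl
    refine ⟨q + k, mem_progression.mpr ⟨by omega, Nat.add_modEq_right.trans hl.2⟩, ?_⟩
    exact sRow_add_self hk (by omega) hln

lemma Tmat_mul_apply_of_val_eq_zero {k n : ℕ} (N : Matrix (Fin n) (Fin n) ℤ) {i : Fin n}
    (hi : (i : ℕ) = 0) (j : Fin n) : (Tmat k n * N) i j = N i j := by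
  rw [Matrix.mul_apply, sum_eq_single i]
  · simp [Tmat, hi]
  · intro l _ hl
    have : (l : ℕ) ≠ 0 := fun h => hl (Fin.ext (by omega))
    simp [Tmat, hi, this]
  · simp

lemma Tmat_mul_Mmat_apply_of_val_pos {k n : ℕ} {i : Fin n} (hi : 0 < (i : ℕ)) (j : Fin n) :
    (Tmat k n * Mmat k n) i j = ∑ l ∈ progression k n (i + 1), sRow k n l (j + 1) := by
  set g : ℕ → ℤ := fun l => if l ∈ progression k n (i + 1) then sRow k n l (j + 1) else 0
  have hterm (l : Fin n) : Tmat k n i l * Mmat k n l j = g (l + 1) := by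
    simp only [g, Tmat, Mmat, mem_progression, Nat.ModEq]
    split_ifs <;> omega
  have hsub : progression k n (i + 1) ⊆ Ico 1 (n + 1) := fun l hl => by
    rw [mem_progression] at hl
    rw [mem_Ico]
    omega
  rw [Matrix.mul_apply, sum_congr rfl fun l _ => hterm l, Fin.sum_univ_eq_sum_range (g <| · + 1),
    range_eq_Ico, sum_Ico_add' g, sum_ite_mem, inter_eq_right.mpr hsub]

theorem stmt_3_general (k n : ℕ) (hk : 2 ≤ k) (i j : Fin n) :
    (Tmat k n * Mmat k n) i j = 0 ∨ (Tmat k n * Mmat k n) i j = 1 := by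
  rcases Nat.eq_zero_or_pos (i : ℕ) with hi | hi
  · rw [Tmat_mul_apply_of_val_eq_zero _ hi]
    simp only [Mmat, sRow, hi]
    split_ifs <;> simp
  · rw [Tmat_mul_Mmat_apply_of_val_pos hi]
    exact sum_sRow_progression (by omega) (by omega) _

/-- Lemma 3.1: every entry of `T * M` lies in `{0, 1}`, i.e. `T * M` is a
binary matrix. -/
theorem stmt_3 (k n : ℕ) (hk : 2 ≤ k) (hn : 2 * k ≤ n) (i j : Fin n) :
    (Tmat k n * Mmat k n) i j = 0 ∨ (Tmat k n * Mmat k n) i j = 1 :=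
  stmt_3_general k n hk i j
end

section
/- With k, n, M, and T as in the construction, det(TM) = 1 or det(TM) = −1. -/
/-!
`T` is upper unitriangular, and `M` is lower triangular with diagonal entries `±1`
(`-1` exactly on the recursive rows), so both determinants are units of `ℤ`.
-/

namespace Matrix

variable {m R : Type*} [Fintype m] [DecidableEq m] [LinearOrder m] [CommRing R]
  {M : Matrix m m R}

theorem IsUpperTriangular.isUnit_det (hM : M.IsUpperTriangular) (hdiag : ∀ i, IsUnit (M i i)) :
    IsUnit M.det := by
  rw [det_of_isUpperTriangular hM]
  exact IsUnit.prod_univ_iff.2 hdiag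

theorem IsLowerTriangular.isUnit_det (hM : M.IsLowerTriangular) (hdiag : ∀ i, IsUnit (M i i)) :
    IsUnit M.det := by
  rw [det_of_isLowerTriangular M hM]
  exact IsUnit.prod_univ_iff.2 hdiag

end Matrix

lemma Tmat_isUpperTriangular (k n : ℕ) : (Tmat k n).IsUpperTriangular := by
  intro i j hji
  have hji : (j : ℕ) < i := hji
  simp only [Tmat]
  rw [if_neg (by omega), if_neg (by omega)]

lemma Tmat_diag (k n : ℕ) (i : Fin n) : Tmat k n i i = 1 := by
  by_cases hi : (i : ℕ) = 0 <;> simp [Tmat, hi, Nat.pos_of_ne_zero]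

lemma Mmat_isLowerTriangular (k n : ℕ) : (Mmat k n).IsLowerTriangular := by
  intro i j hij
  have hij : (i : ℕ) < j := by simpa using hij
  simp only [Mmat, sRow]
  split_ifs <;> omega

lemma isUnit_Mmat_diag (k n : ℕ) (i : Fin n) : IsUnit (Mmat k n i i) := by
  simp only [Mmat, sRow]
  split_ifs <;> simp_all

theorem stmt_5_general (k n : ℕ) :
    (Tmat k n * Mmat k n).det = 1 ∨ (Tmat k n * Mmat k n).det = -1 := by
  rw [← Int.isUnit_iff, Matrix.det_mul]
  exact ((Tmat_isUpperTriangular k n).isUnit_det fun i => by simp [Tmat_diag]).mul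
    ((Mmat_isLowerTriangular k n).isUnit_det (isUnit_Mmat_diag k n))

/-- `det (T * M) = ±1` for the matrices of the construction. -/
theorem stmt_5 (k n : ℕ) (hk : 2 ≤ k) (hn : 2 * k ≤ n) :
    (Tmat k n * Mmat k n).det = 1 ∨ (Tmat k n * Mmat k n).det = -1 :=
  stmt_5_general k n
end

section
/- With k, n, M, and T as in the construction, define v ∈ ℝ^n by v(j) = F_k(j) for 1 ≤ j ≤ n−k and v(i) = −Σ_{j=i−k}^{n−k} F_k(j) for n−k+1 ≤ i ≤ n. Then v is orthogonal to each of s_2, …, s_n. -/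
/-- The `k`-step Fibonacci numbers: `F k j = 0` for `j ≤ 0` (realized on `ℕ` by
`F k 0 = 0`, with out-of-range terms of the window sum truncating to index `0`),
`F k 1 = 1`, and `F k j = Σ_{jp = j - k}^{j - 1} F k jp` for `j ≥ 2`. -/
def F (k : ℕ) : ℕ → ℤ
  | 0 => 0
  | 1 => 1
  | (j + 2) => ∑ i ∈ Finset.range k, F k (j + 1 - i)
  decreasing_by exact Nat.lt_succ_of_le (Nat.sub_le _ _)

/-!
For a recursive row `s_i`, `⟪v, s_i⟫ = Σ_{j=i-k}^{i-1} F_k(j) - F_k(i)`, which vanishes by the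
`k`-step recursion; for a finishing row, `⟪v, s_i⟫ = v(i) + Σ_{j=i-k}^{n-k} F_k(j)`, which vanishes
by the choice of `v(i)`. Terms with index `0` are harmless throughout because `F_k(0) = 0`.
-/

open Finset

section WindowSums

variable {M : Type*} [AddCommMonoid M]

theorem sum_fin_succ_eq_sum_Icc (f : ℕ → M) (n : ℕ) :
    ∑ j : Fin n, f (j + 1) = ∑ j ∈ Icc 1 n, f j := by
  rw [Fin.sum_univ_eq_sum_range (fun j => f (j + 1)), range_eq_Ico, sum_Ico_add',
    zero_add, Ico_add_one_right_eq_Icc]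

variable {f : ℕ → M}

theorem sum_range_sub_eq_sum_Icc (hf : f 0 = 0) (t m : ℕ) :
    ∑ i ∈ range t, f (m - i) = ∑ j ∈ Icc (m + 1 - t) m, f j := by
  induction t with
  | zero => simp
  | succ t ih =>
    rw [sum_range_succ, ih]
    rcases le_or_gt t m with htm | htm
    · rw [show m + 1 - t = m - t + 1 by omega, show m + 1 - (t + 1) = m - t by omega,
        ← insert_Icc_add_one_left_eq_Icc (by omega : m - t ≤ m),
        sum_insert (by simp), add_comm]
    · rw [show m - t = 0 by omega, hf, add_zero, show m + 1 - t = m + 1 - (t + 1) by omega]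

theorem sum_Icc_inter_Icc_eq_sum_Icc (hf : f 0 = 0) {a b n : ℕ} (hb : b ≤ n) :
    ∑ j ∈ Icc 1 n ∩ Icc a b, f j = ∑ j ∈ Icc a b, f j := by
  refine sum_subset inter_subset_right fun j hj hj' => ?_
  obtain rfl : j = 0 := by simp only [mem_inter, mem_Icc] at hj hj'; omega
  exact hf

end WindowSums

theorem F_zero (k : ℕ) : F k 0 = 0 := by
  simp [F]

theorem F_eq_sum_Icc (k : ℕ) {m : ℕ} (hm : 2 ≤ m) :
    F k m = ∑ j ∈ Icc (m - k) (m - 1), F k j := by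
  obtain ⟨m, rfl⟩ : ∃ m', m = m' + 2 := ⟨m - 2, by omega⟩
  rw [F, sum_range_sub_eq_sum_Icc (F_zero k)]
  rfl

-- The vector `v`, indexed from `1` as in the paper; at index `0` it is `F k 0 = 0`.
def orthVec (k n j : ℕ) : ℤ :=
  if j ≤ n - k then F k j else -∑ j' ∈ Icc (j - k) (n - k), F k j'

theorem orthVec_zero (k n : ℕ) : orthVec k n 0 = 0 := by
  simp [orthVec, F_zero]

theorem orthVec_of_le {k n j : ℕ} (h : j ≤ n - k) : orthVec k n j = F k j :=
  if_pos h

theorem sRow_of_le {k n m j : ℕ} (hm : 2 ≤ m) (hmk : m ≤ n - k) (hj : 1 ≤ j) :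
    sRow k n m j = (if j ∈ Icc (m - k) (m - 1) then 1 else 0) - if j = m then 1 else 0 := by
  simp only [sRow, mem_Icc]
  split_ifs <;> omega

theorem sRow_of_lt {k n m j : ℕ} (hm : 2 ≤ m) (hmk : n - k < m) :
    sRow k n m j = (if j = m then 1 else 0) + if j ∈ Icc (m - k) (n - k) then 1 else 0 := by
  simp only [sRow, mem_Icc]
  split_ifs <;> omega

theorem sum_orthVec_mul_boole_Icc {k n a b : ℕ} (hb : b ≤ n) :
    ∑ j ∈ Icc 1 n, orthVec k n j * (if j ∈ Icc a b then 1 else 0) =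
      ∑ j ∈ Icc a b, orthVec k n j := by
  simp only [mul_boole]
  rw [sum_ite_mem, sum_Icc_inter_Icc_eq_sum_Icc (orthVec_zero k n) hb]

theorem sum_orthVec_mul_boole_eq {k n m : ℕ} (hm : m ∈ Icc 1 n) :
    ∑ j ∈ Icc 1 n, orthVec k n j * (if j = m then 1 else 0) = orthVec k n m := by
  simp only [mul_boole, sum_ite_eq', if_pos hm]

theorem sum_orthVec_mul_sRow_of_le {k n m : ℕ} (hm : 2 ≤ m) (hmk : m ≤ n - k) :
    ∑ j ∈ Icc 1 n, orthVec k n j * sRow k n m j = 0 := by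
  calc ∑ j ∈ Icc 1 n, orthVec k n j * sRow k n m j
      = ∑ j ∈ Icc (m - k) (m - 1), orthVec k n j - orthVec k n m := by
        rw [sum_congr rfl fun j hj => by rw [sRow_of_le hm hmk (mem_Icc.1 hj).1, mul_sub],
          sum_sub_distrib, sum_orthVec_mul_boole_Icc (by omega),
          sum_orthVec_mul_boole_eq (by simp only [mem_Icc]; omega)]
    _ = ∑ j ∈ Icc (m - k) (m - 1), F k j - F k m := by
        rw [sum_congr rfl fun j hj => orthVec_of_le (by simp only [mem_Icc] at hj; omega),
          orthVec_of_le hmk]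
    _ = 0 := by rw [← F_eq_sum_Icc k hm, sub_self]

theorem sum_orthVec_mul_sRow_of_lt {k n m : ℕ} (hm : 2 ≤ m) (hmk : n - k < m) (hmn : m ≤ n) :
    ∑ j ∈ Icc 1 n, orthVec k n j * sRow k n m j = 0 := by
  calc ∑ j ∈ Icc 1 n, orthVec k n j * sRow k n m j
      = orthVec k n m + ∑ j ∈ Icc (m - k) (n - k), orthVec k n j := by
        rw [sum_congr rfl fun j _ => by rw [sRow_of_lt hm hmk, mul_add],
          sum_add_distrib, sum_orthVec_mul_boole_Icc (by omega),
          sum_orthVec_mul_boole_eq (by simp only [mem_Icc]; omega)]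
    _ = 0 := by
        rw [sum_congr rfl fun j hj => orthVec_of_le (mem_Icc.1 hj).2, orthVec, if_neg (by omega),
          neg_add_cancel]

theorem stmt_6_general (k n : ℕ) (v : Fin n → ℝ)
    (hv : ∀ j : Fin n, v j =
      if (j : ℕ) + 1 ≤ n - k then (F k ((j : ℕ) + 1) : ℝ)
      else -(∑ j' ∈ Finset.Icc ((j : ℕ) + 1 - k) (n - k), (F k j' : ℝ))) :
    ∀ i : Fin n, (i : ℕ) ≠ 0 →
      ∑ j : Fin n, v j * ((Mmat k n) i j : ℝ) = 0 := by
  intro i hi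
  have hv' : ∀ j : Fin n, v j = orthVec k n (j + 1) := fun j => by
    rw [hv, orthVec]; push_cast; rfl
  have hm : 2 ≤ (i : ℕ) + 1 := by omega
  have hmn : (i : ℕ) + 1 ≤ n := i.isLt
  suffices ∑ j ∈ Icc 1 n, orthVec k n j * sRow k n (i + 1) j = 0 by
    simp only [hv', Mmat]
    exact_mod_cast
      (sum_fin_succ_eq_sum_Icc (fun j => orthVec k n j * sRow k n (i + 1) j) n).trans this
  rcases le_or_gt ((i : ℕ) + 1) (n - k) with hmk | hmk
  · exact sum_orthVec_mul_sRow_of_le hm hmk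
  · exact sum_orthVec_mul_sRow_of_lt hm hmk hmn

/-- Theorem 3.3 (first part): the vector `v` defined by `v j = F k j` for
`1 ≤ j ≤ n - k` and `v i = -Σ_{j = i - k}^{n - k} F k j` for
`n - k + 1 ≤ i ≤ n` is orthogonal to each of `s_2, …, s_n`. -/
theorem stmt_6 (k n : ℕ) (hk : 2 ≤ k) (hn : 2 * k ≤ n) (v : Fin n → ℝ)
    (hv : ∀ j : Fin n, v j =
      if (j : ℕ) + 1 ≤ n - k then (F k ((j : ℕ) + 1) : ℝ)
      else -(∑ j' ∈ Finset.Icc ((j : ℕ) + 1 - k) (n - k), (F k j' : ℝ))) :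
    ∀ i : Fin n, (i : ℕ) ≠ 0 →
      ∑ j : Fin n, v j * ((Mmat k n) i j : ℝ) = 0 :=
  stmt_6_general k n v hv
end

section
/- For every integer k ≥ 2, the function f(z) = z − 2 + z^{−k} has exactly one zero (counted with multiplicity) in the closed disk {z ∈ ℂ : |z − 2| ≤ 2^{1−k}}; equivalently, the polynomial z^{k+1} − 2z^k + 1 has exactly one root in that disk. -/
/-!
Write `ε = 2^(1-k)` and `p = X^(k+1) - 2X^k + 1`. On the disk `|z - 2| ≤ ε` we have `|z| ≥ 2 - ε`,
and `k < (2 - ε)^(k+1)`. The roots of `p` in the disk are the fixed points of `T z = 2 - z^(-k)`,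
and `|T' z| = k / |z|^(k+1) < 1` there, so by the mean value inequality `T` is a contraction of
the convex disk and has at most one fixed point. The same bound rules out a double root, because
`z p'(z) = z^(k+1) - k` at a root `z`. A real root in `[2 - ε, 2]` exists by the intermediate
value theorem, since `p(2) = 1` and, by Bernoulli's inequality, `p(2 - ε) = 1 - ε (2 - ε)^k ≤ 0`.
-/

open Polynomial Metric Set

section
variable {R : Type*} [CommRing R] (k : ℕ) (z : R)

lemma eval_X_pow_succ_sub_two_mul_X_pow_add_one :
    eval z (X ^ (k + 1) - C 2 * X ^ k + 1 : R[X]) = z ^ k * (z - 2) + 1 := by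
  simp only [eval_add, eval_sub, eval_mul, eval_pow, eval_X, eval_C, eval_one]; ring

lemma mul_eval_derivative_X_pow_succ_sub_two_mul_X_pow_add_one :
    z * eval z (derivative (X ^ (k + 1) - C 2 * X ^ k + 1 : R[X])) =
      z ^ (k + 1) + k * (z ^ k * (z - 2)) := by
  cases k with
  | zero => simp
  | succ m => simp; ring

end

lemma natCast_mul_two_zpow_one_sub_le_one (k : ℕ) : (k : ℝ) * 2 ^ ((1 : ℤ) - k) ≤ 1 := by
  rcases Nat.eq_zero_or_pos k with rfl | hk
  · simp
  have hk' : (k : ℝ) ≤ 2 ^ (k - 1) := by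
    have := (k - 1).lt_two_pow_self
    exact_mod_cast (by omega : k ≤ 2 ^ (k - 1))
  rw [zpow_sub₀ two_ne_zero, zpow_one, zpow_natCast, mul_div_assoc', div_le_one (by positivity)]
  calc (k : ℝ) * 2 ≤ 2 ^ (k - 1) * 2 := by gcongr
    _ = 2 ^ k := by rw [← pow_succ, Nat.sub_add_cancel hk]

lemma one_le_two_zpow_one_sub_mul_pow (k : ℕ) :
    1 ≤ (2 : ℝ) ^ ((1 : ℤ) - k) * (2 - 2 ^ ((1 : ℤ) - k)) ^ k := by
  set ε : ℝ := 2 ^ ((1 : ℤ) - k)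
  have hε_mul : ε * 2 ^ k = 2 := by
    rw [← zpow_natCast, ← zpow_add₀ two_ne_zero, sub_add_cancel, zpow_one]
  have hε_le : ε ≤ 2 := by
    simpa using zpow_le_zpow_right₀ (a := (2 : ℝ)) one_le_two (by omega : (1 : ℤ) - k ≤ 1)
  have hkε := natCast_mul_two_zpow_one_sub_le_one k
  have bernoulli := one_add_mul_le_pow (by linarith : -2 ≤ -(ε / 2)) k
  calc (1 : ℝ) ≤ ε * 2 ^ k * (1 + k * -(ε / 2)) := by rw [hε_mul]; linarith
    _ ≤ ε * 2 ^ k * (1 + -(ε / 2)) ^ k := by gcongr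
    _ = ε * (2 - ε) ^ k := by rw [mul_assoc, ← mul_pow]; ring_nf

lemma natCast_lt_two_sub_two_zpow_one_sub_pow_succ {k : ℕ} (hk : 2 ≤ k) :
    (k : ℝ) < (2 - 2 ^ ((1 : ℤ) - k)) ^ (k + 1) := by
  set ε : ℝ := 2 ^ ((1 : ℤ) - k)
  have hε_pos : 0 < ε := by positivity
  have hkε := natCast_mul_two_zpow_one_sub_le_one k
  have hk' : (2 : ℝ) ≤ k := by exact_mod_cast hk
  have h := one_le_two_zpow_one_sub_mul_pow k
  rw [pow_succ]
  nlinarith [mul_le_mul_of_nonneg_right h (by nlinarith : (0 : ℝ) ≤ 2 - ε)]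

lemma exists_pow_mul_sub_two_add_one_eq_zero {k : ℕ} {ε : ℝ} (hε : 0 ≤ ε)
    (h : 1 ≤ ε * (2 - ε) ^ k) : ∃ r ∈ Icc (2 - ε) 2, r ^ k * (r - 2) + 1 = 0 :=
  intermediate_value_Icc (by linarith) (by fun_prop) ⟨by linarith, by norm_num⟩

section
variable {k : ℕ} {ρ : ℝ}

lemma norm_deriv_zpow_neg_le {z : ℂ} (hρ : 0 < ρ) (hz : ρ ≤ ‖z‖) :
    ‖deriv (fun x : ℂ => x ^ (-(k : ℤ))) z‖ ≤ k / ρ ^ (k + 1) := by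
  have hz0 : z ≠ 0 := norm_pos_iff.mp (hρ.trans_le hz)
  rw [deriv_zpow, norm_mul, norm_zpow, show -(k : ℤ) - 1 = -((k + 1 : ℕ) : ℤ) by push_cast; ring,
    zpow_neg, zpow_natCast, Int.cast_neg, Int.cast_natCast, norm_neg, Complex.norm_natCast,
    ← div_eq_mul_inv]
  gcongr

lemma eq_of_pow_mul_sub_two_add_one_eq_zero {s : Set ℂ} (hs : Convex ℝ s) (hρ : 0 < ρ)
    (hρk : k < ρ ^ (k + 1)) (hsρ : ∀ z ∈ s, ρ ≤ ‖z‖) {z w : ℂ} (hz : z ∈ s) (hw : w ∈ s)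
    (hz0 : z ^ k * (z - 2) + 1 = 0) (hw0 : w ^ k * (w - 2) + 1 = 0) : z = w := by
  set f : ℂ → ℂ := fun x => x ^ (-(k : ℤ))
  have hne : ∀ x ∈ s, x ≠ 0 := fun x hx => norm_pos_iff.mp (hρ.trans_le (hsρ x hx))
  have fixed : ∀ x ∈ s, x ^ k * (x - 2) + 1 = 0 → x = 2 - f x := by
    intro x hx hx0
    have := pow_ne_zero k (hne x hx)
    simp only [f, zpow_neg, zpow_natCast]
    field_simp
    linear_combination hx0
  have hC : (k : ℝ) / ρ ^ (k + 1) < 1 := (div_lt_one (by positivity)).mpr hρk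
  have lip : ‖f z - f w‖ ≤ k / ρ ^ (k + 1) * ‖z - w‖ :=
    hs.norm_image_sub_le_of_norm_deriv_le
      (fun x hx => differentiableAt_zpow.mpr (Or.inl (hne x hx)))
      (fun x hx => norm_deriv_zpow_neg_le hρ (hsρ x hx)) hw hz
  have : ‖z - w‖ = ‖f z - f w‖ := by
    rw [← norm_neg, show -(z - w) = f z - f w by
      linear_combination fixed w hw hw0 - fixed z hz hz0]
  rw [← sub_eq_zero, ← norm_eq_zero]
  nlinarith [norm_nonneg (z - w)]

lemma not_isRoot_derivative_of_lt_norm_pow {z : ℂ}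
    (hz : (X ^ (k + 1) - C 2 * X ^ k + 1 : ℂ[X]).IsRoot z) (hzk : k < ‖z‖ ^ (k + 1)) :
    ¬ (derivative (X ^ (k + 1) - C 2 * X ^ k + 1 : ℂ[X])).IsRoot z := by
  intro hz'
  have h := mul_eval_derivative_X_pow_succ_sub_two_mul_X_pow_add_one k z
  rw [hz'.eq_zero, mul_zero] at h
  rw [IsRoot.def, eval_X_pow_succ_sub_two_mul_X_pow_add_one] at hz
  have : z ^ (k + 1) = k := by linear_combination -h - k * hz
  have := congrArg norm this
  rw [norm_pow, Complex.norm_natCast] at this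
  linarith

lemma card_filter_roots_eq_one {s : Set ℂ} [DecidablePred (· ∈ s)] (hs : Convex ℝ s)
    (hρ : 0 < ρ) (hρk : k < ρ ^ (k + 1)) (hsρ : ∀ z ∈ s, ρ ≤ ‖z‖) {r : ℂ} (hr : r ∈ s)
    (hr0 : (X ^ (k + 1) - C 2 * X ^ k + 1 : ℂ[X]).IsRoot r) :
    ((X ^ (k + 1) - C 2 * X ^ k + 1 : ℂ[X]).roots.filter (· ∈ s)).card = 1 := by
  set p : ℂ[X] := X ^ (k + 1) - C 2 * X ^ k + 1
  have hp0 : p ≠ 0 := fun h => by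
    simpa [p, h] using eval_X_pow_succ_sub_two_mul_X_pow_add_one k (2 : ℂ)
  have root_iff : ∀ z, p.IsRoot z ↔ z ^ k * (z - 2) + 1 = 0 := fun z => by
    rw [IsRoot.def, eval_X_pow_succ_sub_two_mul_X_pow_add_one]
  have unique : ∀ z ∈ p.roots.filter (· ∈ s), r = z := fun z hz => by
    obtain ⟨hz_root, hz_mem⟩ := Multiset.mem_filter.mp hz
    exact eq_of_pow_mul_sub_two_add_one_eq_zero hs hρ hρk hsρ hr hz_mem ((root_iff r).mp hr0)
      ((root_iff z).mp (isRoot_of_mem_roots hz_root))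
  have simple : p.rootMultiplicity r = 1 := by
    have hr_norm : (k : ℝ) < ‖r‖ ^ (k + 1) := hρk.trans_le (by gcongr; exact hsρ r hr)
    have := (one_lt_rootMultiplicity_iff_isRoot hp0).not.mpr
      (fun h => not_isRoot_derivative_of_lt_norm_pow hr0 hr_norm h.2)
    have := (rootMultiplicity_pos hp0).mpr hr0
    omega
  rw [← Multiset.count_eq_card.mpr unique, Multiset.count_filter_of_pos hr, count_roots, simple]

end

open Polynomial in
/-- For every integer `k ≥ 2`, the function `z ↦ z - 2 + z⁻ᵏ` has exactly one
zero (with multiplicity) in the closed disk `{z : |z - 2| ≤ 2^(1-k)}`;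
equivalently (since `z ≠ 0` on that disk), the polynomial `z^(k+1) - 2 z^k + 1`
has exactly one root (with multiplicity) in that disk. -/
theorem stmt_8 (k : ℕ) (hk : 2 ≤ k) :
    (((X ^ (k + 1) - C 2 * X ^ k + 1 : ℂ[X]).roots).filter
      (fun z => ‖z - 2‖ ≤ (2 : ℝ) ^ ((1 : ℤ) - (k : ℤ)))).card = 1 := by
  classical
  set ε : ℝ := 2 ^ ((1 : ℤ) - k)
  have hε_pos : 0 < ε := by positivity
  have hε_lt : ε < 2 := by
    have := natCast_mul_two_zpow_one_sub_le_one k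
    have : (2 : ℝ) ≤ k := by exact_mod_cast hk
    nlinarith
  obtain ⟨r, ⟨hr_ge, hr_le⟩, hr0⟩ :=
    exists_pow_mul_sub_two_add_one_eq_zero hε_pos.le (one_le_two_zpow_one_sub_mul_pow k)
  have hr_mem : (r : ℂ) ∈ closedBall (2 : ℂ) ε := by
    rw [mem_closedBall, dist_eq_norm, ← Complex.ofReal_ofNat, ← Complex.ofReal_sub,
      Complex.norm_real, Real.norm_eq_abs, abs_le]
    constructor <;> linarith
  have hr_root : (X ^ (k + 1) - C 2 * X ^ k + 1 : ℂ[X]).IsRoot r := by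
    rw [IsRoot.def, eval_X_pow_succ_sub_two_mul_X_pow_add_one]
    exact_mod_cast hr0
  have norm_ge : ∀ z ∈ closedBall (2 : ℂ) ε, 2 - ε ≤ ‖z‖ := fun z hz => by
    have := norm_sub_norm_le (2 : ℂ) z
    rw [mem_closedBall, dist_comm, dist_eq_norm] at hz
    norm_num at this
    linarith
  simpa only [mem_closedBall, dist_eq_norm] using
    card_filter_roots_eq_one (convex_closedBall 2 ε) (sub_pos.mpr hε_lt)
      (natCast_lt_two_sub_two_zpow_one_sub_pow_succ hk) norm_ge hr_mem hr_root
end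

section
/- Let k ≥ 2 be an integer and let α be a real number with 2 − 2^{1−k} ≤ α < 2 satisfying α − 2 + α^{−k} = 0. Then for every integer n ≥ 8, F_k(n) > (1/5)·α^n. -/
open Finset

section Fibonacci

variable {k : ℕ}

lemma F_add_two (j : ℕ) : F k (j + 2) = ∑ i ∈ range k, F k (j + 1 - i) := by
  rw [F]

lemma F_two (hk : 1 ≤ k) : F k 2 = 1 := by
  obtain ⟨K, rfl⟩ : ∃ K, k = K + 1 := ⟨k - 1, by omega⟩
  simp [F_add_two, sum_range_succ', F]

lemma F_add_three_add_F_sub (hk : 1 ≤ k) (j : ℕ) :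
    F k (j + 3) + F k (j + 2 - k) = 2 * F k (j + 2) := by
  obtain ⟨K, rfl⟩ : ∃ K, k = K + 1 := ⟨k - 1, by omega⟩
  have hprev := F_add_two (k := K + 1) j
  rw [sum_range_succ, show j + 1 - K = j + 2 - (K + 1) by omega] at hprev
  rw [F_add_two (j + 1), sum_range_succ']
  simp only [Nat.add_sub_add_right, Nat.sub_zero]
  linarith

lemma F_add_two_of_lt {m : ℕ} (hm : m < k) : F k (m + 2) = 2 ^ m := by
  induction m with
  | zero => exact F_two (by omega)
  | succ m ih =>
    have hwindow := F_add_three_add_F_sub (k := k) (by omega) m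
    rw [show m + 2 - k = 0 by omega, F, ih (by omega)] at hwindow
    rw [pow_succ]
    linarith

end Fibonacci

lemma geom_sum_eq_pow_of_pow_mul_two_sub {K : Type*} [Field K] {α : K} {k : ℕ} (hα : α ≠ 1)
    (hroot : α ^ k * (2 - α) = 1) : ∑ i ∈ range k, α ^ i = α ^ k := by
  refine mul_right_cancel₀ (sub_ne_zero.2 hα) ?_
  rw [geom_sum_mul]
  linear_combination hroot

lemma pow_succ_eq_sum_pow_sub {R : Type*} [CommSemiring R] {α : R} {k p : ℕ}
    (hgeom : ∑ i ∈ range k, α ^ i = α ^ k) (hkp : k ≤ p + 1) :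
    α ^ (p + 1) = ∑ i ∈ range k, α ^ (p - i) :=
  calc α ^ (p + 1) = α ^ (p + 1 - k) * α ^ k := by rw [← pow_add, Nat.sub_add_cancel hkp]
    _ = ∑ i ∈ range k, α ^ (p + 1 - k + i) := by simp only [← hgeom, mul_sum, pow_add]
    _ = ∑ i ∈ range k, α ^ (p - i) := by
      rw [← sum_range_reflect]
      refine sum_congr rfl fun i hi => ?_
      rw [mem_range] at hi
      congr 1
      omega

lemma pow_le_F_add_two {k : ℕ} (hk : 1 ≤ k) {α : ℝ} (hα0 : 0 ≤ α) (hα2 : α ≤ 2)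
    (hgeom : ∑ i ∈ range k, α ^ i = α ^ k) (m : ℕ) : α ^ m ≤ F k (m + 2) := by
  induction m using Nat.strong_induction_on with
  | _ m ih =>
    rcases lt_or_ge m k with hmk | hkm
    · rw [F_add_two_of_lt hmk]
      push_cast
      exact pow_le_pow_left₀ hα0 hα2 m
    · obtain ⟨p, rfl⟩ : ∃ p, m = p + 1 := ⟨m - 1, by omega⟩
      rw [pow_succ_eq_sum_pow_sub hgeom hkm, F_add_two]
      push_cast
      refine sum_le_sum fun i hi => ?_
      rw [mem_range] at hi
      rw [show p + 1 + 1 - i = p - i + 2 by omega]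
      exact ih (p - i) (by omega)

/-- Lemma 3.4: if `k ≥ 2` and `α` is a real number with `2 - 2^(1-k) ≤ α < 2`
and `α - 2 + α⁻ᵏ = 0`, then `F k n > (1/5) α^n` for every integer `n ≥ 8`. -/
theorem stmt_10 (k : ℕ) (hk : 2 ≤ k) (α : ℝ)
    (hα1 : 2 - (2 : ℝ) ^ ((1 : ℤ) - (k : ℤ)) ≤ α) (hα2 : α < 2)
    (hroot : α - 2 + α ^ (-(k : ℤ)) = 0)
    (n : ℕ) (hn : 8 ≤ n) :
    (F k n : ℝ) > (1 / 5) * α ^ n := by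
  have hα : 1 < α := by
    have : (2 : ℝ) ^ ((1 : ℤ) - k) ≤ 2 ^ (-1 : ℤ) := zpow_le_zpow_right₀ (by norm_num) (by omega)
    norm_num at this
    linarith
  have hinv : (α ^ k)⁻¹ = 2 - α := by
    rw [← zpow_natCast, ← zpow_neg]
    linarith
  have hchar : α ^ k * (2 - α) = 1 := by
    rw [← hinv]
    exact mul_inv_cancel₀ (by positivity)
  have hgeom := geom_sum_eq_pow_of_pow_mul_two_sub hα.ne' hchar
  obtain ⟨m, rfl⟩ : ∃ m, n = m + 2 := ⟨n - 2, by omega⟩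
  have hpos : 0 < α ^ m := by positivity
  calc (1 / 5) * α ^ (m + 2) = α ^ 2 / 5 * α ^ m := by ring
    _ < 1 * α ^ m := mul_lt_mul_of_pos_right (by nlinarith) hpos
    _ = α ^ m := one_mul _
    _ ≤ F k (m + 2) := pow_le_F_add_two (by omega) (by positivity) hα2.le hgeom m
end
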